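/- arXiv:1805.06763 — 2 statements merged into one kernel-verified Lean document; each statement's English description precedes it below -/
import Mathlib

section
/- For every modal proposition A, if IPC_□ ⊢ A then iK4 ⊢ A^□. -/
/-- Modal propositional formulas: atoms, ⊥, ∧, ∨, →, □. -/
inductive Form : Type
  | atom : ℕ → Form
  | bot  : Form
  | and  : Form → Form → Form
  | or   : Form → Form → Form
  | imp  : Form → Form → Form
  | box  : Form → Form
  deriving DecidableEq

namespace Form

/-- ⊤ := ⊥ → ⊥. -/
def top : Form := .imp .bot .bot

/-- Biimplication A ↔ B := (A → B) ∧ (B → A). -/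
def biimp (A B : Form) : Form := .and (.imp A B) (.imp B A)

/-- ⊡A := A ∧ □A. -/
def dotbox (A : Form) : Form := .and A (.box A)

/-- Axiom schemes of intuitionistic propositional logic (in the modal language;
no axioms for □, so boxed formulas behave as atoms). -/
inductive IpcAx : Form → Prop
  | k (A B : Form) : IpcAx (.imp A (.imp B A))
  | s (A B C : Form) : IpcAx (.imp (.imp A (.imp B C)) (.imp (.imp A B) (.imp A C)))
  | andI (A B : Form) : IpcAx (.imp A (.imp B (.and A B)))
  | andE₁ (A B : Form) : IpcAx (.imp (.and A B) A)
  | andE₂ (A B : Form) : IpcAx (.imp (.and A B) B)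
  | orI₁ (A B : Form) : IpcAx (.imp A (.or A B))
  | orI₂ (A B : Form) : IpcAx (.imp B (.or A B))
  | orE (A B C : Form) : IpcAx (.imp (.imp A C) (.imp (.imp B C) (.imp (.or A B) C)))
  | exfalso (A : Form) : IpcAx (.imp .bot A)

/-- Derivability from the axiom set `Ax` by modus ponens alone. -/
inductive DerivMP (Ax : Form → Prop) : Form → Prop
  | ax {A : Form} : Ax A → DerivMP Ax A
  | mp {A B : Form} : DerivMP Ax (.imp A B) → DerivMP Ax A → DerivMP Ax B

/-- Derivability from the axiom set `Ax` by modus ponens and necessitation. -/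
inductive Deriv (Ax : Form → Prop) : Form → Prop
  | ax {A : Form} : Ax A → Deriv Ax A
  | mp {A B : Form} : Deriv Ax (.imp A B) → Deriv Ax A → Deriv Ax B
  | nec {A : Form} : Deriv Ax A → Deriv Ax (.box A)

/-- The K axiom scheme □(A→B)→(□A→□B). -/
def KAx (F : Form) : Prop := ∃ A B : Form, F = .imp (.box (.imp A B)) (.imp (.box A) (.box B))
/-- The 4 axiom scheme □A→□□A. -/
def FourAx (F : Form) : Prop := ∃ A : Form, F = .imp (.box A) (.box (.box A))
/-- Löb's axiom scheme □(□A→A)→□A. -/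
def LobAx (F : Form) : Prop := ∃ A : Form, F = .imp (.box (.imp (.box A) A)) (.box A)
/-- The completeness principle scheme A→□A. -/
def CPAx (F : Form) : Prop := ∃ A : Form, F = .imp A (.box A)
/-- The completeness principle restricted to atoms: p→□p. -/
def CPaAx (F : Form) : Prop := ∃ n : ℕ, F = .imp (.atom n) (.box (.atom n))

/-- Axioms of iK4: IPC plus K plus 4. -/
def K4Ax (F : Form) : Prop := IpcAx F ∨ KAx F ∨ FourAx F
/-- Axioms of iGL: iK4 plus Löb. -/
def GLAx (F : Form) : Prop := K4Ax F ∨ LobAx F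

/-- IPC_□ provability (modus ponens only; no rules for □). -/
def IPCbox (A : Form) : Prop := DerivMP IpcAx A
/-- iK4 provability. -/
def IK4 (A : Form) : Prop := Deriv K4Ax A
/-- iGL provability. -/
def IGL (A : Form) : Prop := Deriv GLAx A
/-- iGLC := iGL + CP. -/
def IGLC (A : Form) : Prop := Deriv (fun F => GLAx F ∨ CPAx F) A

/-- The box translation A^□. -/
def boxT : Form → Form
  | .atom n => .and (.atom n) (.box (.atom n))
  | .bot => .bot
  | .and A B => .and (boxT A) (boxT B)
  | .or A B => .or (boxT A) (boxT B)
  | .imp A B => .and (.imp (boxT A) (boxT B)) (.box (.imp (boxT A) (boxT B)))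
  | .box A => .box (boxT A)

/-- `[A]B`: identity on atoms, ⊥ and boxed formulas, commutes with ∧ and ∨,
and `[A](B₁→B₂) = A→(B₁→B₂)`. -/
def bracket (A : Form) : Form → Form
  | .and B C => .and (bracket A B) (bracket A C)
  | .or B C => .or (bracket A B) (bracket A C)
  | .imp B C => .imp A (.imp B C)
  | B => B

/-- Conjunction of a finite list of formulas. -/
def conj (l : List Form) : Form := l.foldr .and top
/-- Disjunction of a finite list of formulas. -/
def disj (l : List Form) : Form := l.foldr .or .bot

/-- `[A]Z := ⋁{[A]E : E ∈ Z}`. -/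
def bracketList (A : Form) (Z : List Form) : Form := disj (Z.map (bracket A))

/-- A finite set of implications, given as the list of (antecedent, consequent) pairs. -/
def impsOf (X : List (Form × Form)) : List Form := X.map fun D => .imp D.1 D.2

def IsAtomOrBoxed (p : Form) : Prop := (∃ n : ℕ, p = .atom n) ∨ (∃ B : Form, p = .box B)

/-- The relation ▶* (with rule B2). -/
inductive PresS : Form → Form → Prop
  | a1 {A B : Form} : IK4 (.imp A B) → PresS A B
  | a2 {A B C : Form} : PresS A B → PresS B C → PresS A C
  | a3 {A B C : Form} : PresS C A → PresS C B → PresS C (.and A B)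
  | a4 {A B : Form} : PresS A B → PresS (.box A) (.box B)
  | b1 {A B C : Form} : PresS A C → PresS B C → PresS (.or A B) C
  | b2 (X : List (Form × Form)) (C : Form) :
      PresS (.and (.imp (conj (impsOf X)) C) (.box (conj (impsOf X))))
            (bracketList (conj (impsOf X)) (X.map Prod.fst ++ [C]))
  | b3 {p A B : Form} : IsAtomOrBoxed p → PresS A B → PresS (.imp p A) (.imp p B)

/-- The relation ▶ (with rule B2′ instead of B2). -/
inductive Pres : Form → Form → Prop
  | a1 {A B : Form} : IK4 (.imp A B) → Pres A B
  | a2 {A B C : Form} : Pres A B → Pres B C → Pres A C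
  | a3 {A B C : Form} : Pres C A → Pres C B → Pres C (.and A B)
  | a4 {A B : Form} : Pres A B → Pres (.box A) (.box B)
  | b1 {A B C : Form} : Pres A C → Pres B C → Pres (.or A B) C
  | b2 (X : List (Form × Form)) (C : Form) :
      Pres (.imp (conj (impsOf X)) C)
           (bracketList (conj (impsOf X)) (X.map Prod.fst ++ [C]))
  | b3 {p A B : Form} : IsAtomOrBoxed p → Pres A B → Pres (.imp p A) (.imp p B)

/-- iH*_σ := iGL + CP + {□A→□B : A ▶* B}. -/
def IHstarAx (F : Form) : Prop :=
  GLAx F ∨ CPAx F ∨ ∃ A B : Form, PresS A B ∧ F = .imp (.box A) (.box B)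
def IHstar (A : Form) : Prop := Deriv IHstarAx A

/-- NOI (as a Boolean predicate): every → occurs within the scope of some □. -/
def noi : Form → Bool
  | .atom _ => true
  | .bot => true
  | .and A B => noi A && noi B
  | .or A B => noi A && noi B
  | .imp _ _ => false
  | .box _ => true

/-- NOI: every occurrence of → lies within the scope of some □. -/
def NOI (A : Form) : Prop := noi A = true

/-- The Leivant translation A^l. -/
def leiv : Form → Form
  | .and A B => .and (leiv A) (leiv B)
  | .or A B => .or (dotbox (leiv A)) (dotbox (leiv B))
  | .imp A B => if noi A then .imp A (leiv B) else .imp A B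
  | A => A

/-- iH_σ := iGL + CP_a + Le⁺ + {□A→□B : A ▶ B}. -/
def IHsigmaAx (F : Form) : Prop :=
  GLAx F ∨ CPaAx F ∨ (∃ A : Form, F = .imp (.box A) (.box (leiv A)))
    ∨ ∃ A B : Form, Pres A B ∧ F = .imp (.box A) (.box B)
def IHsigma (A : Form) : Prop := Deriv IHsigmaAx A

/-- TNNIL: smallest class containing atoms and ⊥, closed under ∧, ∨, □, and
containing A→B whenever A, B ∈ TNNIL and A ∈ NOI. -/
inductive TNNIL : Form → Prop
  | atom (n : ℕ) : TNNIL (.atom n)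
  | bot : TNNIL .bot
  | and {A B : Form} : TNNIL A → TNNIL B → TNNIL (.and A B)
  | or {A B : Form} : TNNIL A → TNNIL B → TNNIL (.or A B)
  | box {A : Form} : TNNIL A → TNNIL (.box A)
  | imp {A B : Form} : NOI A → TNNIL A → TNNIL B → TNNIL (.imp A B)

/-- Substitution of formulas for atoms. -/
def subst (σ : ℕ → Form) : Form → Form
  | .atom n => σ n
  | .bot => .bot
  | .and A B => .and (subst σ A) (subst σ B)
  | .or A B => .or (subst σ A) (subst σ B)
  | .imp A B => .imp (subst σ A) (subst σ B)
  | .box A => .box (subst σ A)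

/-- Non-modal (□-free) formulas. -/
def BoxFree : Form → Prop
  | .atom _ => True
  | .bot => True
  | .and A B => BoxFree A ∧ BoxFree B
  | .or A B => BoxFree A ∧ BoxFree B
  | .imp A B => BoxFree A ∧ BoxFree B
  | .box _ => False

/-- TNNIL⁻: formulas of the form A(□B₁,…,□Bₙ) with A non-modal and each Bᵢ ∈ TNNIL. -/
def TNNILminus (F : Form) : Prop :=
  ∃ (A : Form) (σ : ℕ → Form), BoxFree A ∧
    (∀ n : ℕ, σ n = .atom n ∨ ∃ B : Form, TNNIL B ∧ σ n = .box B) ∧ F = subst σ A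

/-- The complexity measure ρ (with ρ(□A)=0). -/
def rho : Form → ℕ
  | .atom _ => 0
  | .bot => 0
  | .and A B => max (rho A) (rho B)
  | .or A B => max (rho A) (rho B)
  | .imp A B => max (rho A + 1) (rho B)
  | .box _ => 0

/-- Atoms occurring in a formula. -/
def atoms : Form → Finset ℕ
  | .atom n => {n}
  | .bot => ∅
  | .and A B => atoms A ∪ atoms B
  | .or A B => atoms A ∪ atoms B
  | .imp A B => atoms A ∪ atoms B
  | .box A => atoms A

/-- IPC provability for non-modal formulas (all axiom instances non-modal). -/
def IPC (A : Form) : Prop := DerivMP (fun F => IpcAx F ∧ BoxFree F) A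

/-- An effective encoding of formulas as lists of naturals. -/
def code : Form → List ℕ
  | .atom n => [0, n]
  | .bot => [1]
  | .and A B => 2 :: (code A ++ code B)
  | .or A B => 3 :: (code A ++ code B)
  | .imp A B => 4 :: (code A ++ code B)
  | .box A => 5 :: code A

/-- `B↓D := ⋀((X∖{D})∪{F})` for `D = (E→F) ∈ X`. -/
def bdown (X : List (Form × Form)) (D : Form × Form) : Form :=
  conj (impsOf (X.erase D) ++ [D.2])

/-- The axioms of iGL closed under boxing: if B is an axiom then so is □B. -/
inductive GLAxBox : Form → Prop
  | base {A : Form} : GLAx A → GLAxBox A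
  | box {A : Form} : GLAxBox A → GLAxBox (.box A)

end Form

namespace Form

private lemma ik4_ipc {A : Form} (h : IpcAx A) : IK4 A := Deriv.ax (Or.inl h)
private lemma ik4_K (A B : Form) :
    IK4 (.imp (.box (.imp A B)) (.imp (.box A) (.box B))) :=
  Deriv.ax (Or.inr (Or.inl ⟨A, B, rfl⟩))
private lemma ik4_four (A : Form) : IK4 (.imp (.box A) (.box (.box A))) :=
  Deriv.ax (Or.inr (Or.inr ⟨A, rfl⟩))

/-- Derivability in iK4 from a list of hypotheses by modus ponens. -/
private inductive DH : List Form → Form → Prop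
  | thm {Γ A} : IK4 A → DH Γ A
  | hyp {Γ A} : A ∈ Γ → DH Γ A
  | mp {Γ A B} : DH Γ (.imp A B) → DH Γ A → DH Γ B

private lemma DH.ax {Γ} {A : Form} (h : IpcAx A) : DH Γ A := DH.thm (ik4_ipc h)

private lemma DH.id {Γ} (A : Form) : DH Γ (.imp A A) :=
  ((DH.ax (IpcAx.s A (.imp A A) A)).mp (DH.ax (IpcAx.k A (.imp A A)))).mp
    (DH.ax (IpcAx.k A A))

private lemma ded {Γ} {A B : Form} (h : DH (A :: Γ) B) : DH Γ (.imp A B) := by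
  induction h with
  | thm h => exact (DH.ax (IpcAx.k _ _)).mp (.thm h)
  | hyp h =>
      rcases List.mem_cons.mp h with rfl | h
      · exact DH.id _
      · exact (DH.ax (IpcAx.k _ _)).mp (.hyp h)
  | mp _ _ ih1 ih2 => exact ((DH.ax (IpcAx.s _ _ _)).mp ih1).mp ih2

private lemma ik4_of_DH {A : Form} (h : DH [] A) : IK4 A := by
  induction h with
  | thm h => exact h
  | hyp h => simp at h
  | mp _ _ ih1 ih2 => exact ih1.mp ih2

private lemma DH.fst {Γ} {A B : Form} (h : DH Γ (.and A B)) : DH Γ A :=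
  (DH.ax (IpcAx.andE₁ A B)).mp h
private lemma DH.snd {Γ} {A B : Form} (h : DH Γ (.and A B)) : DH Γ B :=
  (DH.ax (IpcAx.andE₂ A B)).mp h
private lemma DH.pair {Γ} {A B : Form} (h1 : DH Γ A) (h2 : DH Γ B) : DH Γ (.and A B) :=
  ((DH.ax (IpcAx.andI A B)).mp h1).mp h2

private lemma boxK {A B : Form} (h : IK4 (.imp A B)) : IK4 (.imp (.box A) (.box B)) :=
  (ik4_K A B).mp h.nec

private lemma imp_trans {A B C : Form} (h1 : IK4 (.imp A B)) (h2 : IK4 (.imp B C)) :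
    IK4 (.imp A C) :=
  ik4_of_DH (ded ((DH.thm h2).mp ((DH.thm h1).mp (.hyp (by simp)))))

private lemma boxK2 {A B C : Form} (h : IK4 (.imp A (.imp B C))) :
    IK4 (.imp (.box A) (.imp (.box B) (.box C))) :=
  imp_trans (boxK h) (ik4_K B C)

/-- ⊡C → □⊡C in iK4. -/
private lemma sb_dot (C : Form) : IK4 (.imp (.and C (.box C)) (.box (.and C (.box C)))) := by
  apply ik4_of_DH
  apply ded
  have h : DH [Form.and C (.box C)] (.and C (.box C)) := .hyp (by simp)
  have hbc := h.snd
  have hbbc := (DH.thm (ik4_four C)).mp hbc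
  exact ((DH.thm (boxK2 (ik4_ipc (IpcAx.andI C (.box C))))).mp hbc).mp hbbc

private lemma selfbox : ∀ A : Form, IK4 (.imp (boxT A) (.box (boxT A)))
  | .atom n => by
      show IK4 (.imp (.and (.atom n) (.box (.atom n))) _)
      apply ik4_of_DH; apply ded
      have h : DH [Form.and (.atom n) (.box (.atom n))] (.and (.atom n) (.box (.atom n))) :=
        .hyp (by simp)
      have hb := h.snd
      have hbb := (DH.thm (ik4_four (.atom n))).mp hb
      exact ((DH.thm (boxK2 (ik4_ipc (IpcAx.andI (.atom n) (.box (.atom n)))))).mp hb).mp hbb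
  | .bot => ik4_ipc (IpcAx.exfalso _)
  | .and A B => by
      have ihA := selfbox A; have ihB := selfbox B
      show IK4 (.imp (.and (boxT A) (boxT B)) (.box (.and (boxT A) (boxT B))))
      apply ik4_of_DH; apply ded
      have h : DH [Form.and (boxT A) (boxT B)] (.and (boxT A) (boxT B)) := .hyp (by simp)
      exact ((DH.thm (boxK2 (ik4_ipc (IpcAx.andI (boxT A) (boxT B))))).mp
        ((DH.thm ihA).mp h.fst)).mp ((DH.thm ihB).mp h.snd)
  | .or A B => by
      have h1 : IK4 (.imp (boxT A) (.box (.or (boxT A) (boxT B)))) :=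
        imp_trans (selfbox A) (boxK (ik4_ipc (IpcAx.orI₁ (boxT A) (boxT B))))
      have h2 : IK4 (.imp (boxT B) (.box (.or (boxT A) (boxT B)))) :=
        imp_trans (selfbox B) (boxK (ik4_ipc (IpcAx.orI₂ (boxT A) (boxT B))))
      exact ((ik4_ipc (IpcAx.orE _ _ _)).mp h1).mp h2
  | .imp A B => sb_dot (.imp (boxT A) (boxT B))
  | .box A => ik4_four (boxT A)

/-- If iK4 ⊢ C then iK4 ⊢ ⊡C. -/
private lemma dd {C : Form} (h : IK4 C) : IK4 (.and C (.box C)) :=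
  ((ik4_ipc (IpcAx.andI C (.box C))).mp h).mp h.nec

/-- From `P → □P` and `P → (Q → R)` conclude `P → ⊡(Q → R)`. -/
private lemma curry2 {P Q R : Form} (hP : IK4 (.imp P (.box P)))
    (T : IK4 (.imp P (.imp Q R))) :
    IK4 (.imp P (.and (.imp Q R) (.box (.imp Q R)))) := by
  apply ik4_of_DH; apply ded
  have hp : DH [P] P := .hyp (by simp)
  exact DH.pair ((DH.thm T).mp hp) ((DH.thm (boxK T)).mp ((DH.thm hP).mp hp))

private lemma axT {F : Form} (h : IpcAx F) : IK4 (boxT F) := by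
  cases h with
  | k A B =>
      exact dd (curry2 (selfbox A) (ik4_ipc (IpcAx.k (boxT A) (boxT B))))
  | andI A B =>
      exact dd (curry2 (selfbox A) (ik4_ipc (IpcAx.andI (boxT A) (boxT B))))
  | andE₁ A B => exact dd (ik4_ipc (IpcAx.andE₁ (boxT A) (boxT B)))
  | andE₂ A B => exact dd (ik4_ipc (IpcAx.andE₂ (boxT A) (boxT B)))
  | orI₁ A B => exact dd (ik4_ipc (IpcAx.orI₁ (boxT A) (boxT B)))
  | orI₂ A B => exact dd (ik4_ipc (IpcAx.orI₂ (boxT A) (boxT B)))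
  | exfalso A => exact dd (ik4_ipc (IpcAx.exfalso (boxT A)))
  | s A B C =>
      set A' := boxT A with hA'; set B' := boxT B with hB'; set C' := boxT C with hC'
      -- P = ⊡(A' → ⊡(B' → C')), Q = ⊡(A' → B'), R = ⊡(A' → C')
      set P0 : Form := .imp A' (.and (.imp B' C') (.box (.imp B' C'))) with hP0
      set P : Form := .and P0 (.box P0) with hP
      set Q0 : Form := .imp A' B' with hQ0
      set Q : Form := .and Q0 (.box Q0) with hQ
      set R0 : Form := .imp A' C' with hR0
      set R : Form := .and R0 (.box R0) with hR
      have T2 : IK4 (.imp P0 (.imp Q0 R0)) := by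
        apply ik4_of_DH; apply ded; apply ded; apply ded
        have ha : DH [A', Q0, P0] A' := .hyp (by simp)
        have hq : DH [A', Q0, P0] Q0 := .hyp (by simp)
        have hp : DH [A', Q0, P0] P0 := .hyp (by simp)
        exact ((hp.mp ha).fst).mp (hq.mp ha)
      have T : IK4 (.imp P (.imp Q R)) := by
        apply ik4_of_DH; apply ded; apply ded
        have hp : DH [Q, P] P := .hyp (by simp)
        have hq : DH [Q, P] Q := .hyp (by simp)
        refine DH.pair ?_ ?_
        · exact ((DH.thm T2).mp hp.fst).mp hq.fst
        · exact ((DH.thm (boxK2 T2)).mp hp.snd).mp hq.snd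
      exact dd (curry2 (sb_dot P0) T)
  | orE A B C =>
      set A' := boxT A with hA'; set B' := boxT B with hB'; set C' := boxT C with hC'
      set P0 : Form := .imp A' C' with hP0
      set P : Form := .and P0 (.box P0) with hP
      set Q0 : Form := .imp B' C' with hQ0
      set Q : Form := .and Q0 (.box Q0) with hQ
      set R0 : Form := .imp (.or A' B') C' with hR0
      set R : Form := .and R0 (.box R0) with hR
      have T2 : IK4 (.imp P0 (.imp Q0 R0)) := ik4_ipc (IpcAx.orE A' B' C')
      have T : IK4 (.imp P (.imp Q R)) := by
        apply ik4_of_DH; apply ded; apply ded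
        have hp : DH [Q, P] P := .hyp (by simp)
        have hq : DH [Q, P] Q := .hyp (by simp)
        refine DH.pair ?_ ?_
        · exact ((DH.thm T2).mp hp.fst).mp hq.fst
        · exact ((DH.thm (boxK2 T2)).mp hp.snd).mp hq.snd
      exact dd (curry2 (sb_dot P0) T)

private lemma boxT_mp {A B : Form} (h1 : IK4 (boxT (.imp A B))) (h2 : IK4 (boxT A)) :
    IK4 (boxT B) :=
  ((ik4_ipc (IpcAx.andE₁ (.imp (boxT A) (boxT B)) (.box (.imp (boxT A) (boxT B))))).mp h1).mp h2

end Form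

/-- If IPC_□ ⊢ A then iK4 ⊢ A^□. -/
theorem stmt6 (A : Form) (h : Form.IPCbox A) : Form.IK4 (Form.boxT A) := by
  induction h with
  | ax h => exact Form.axT h
  | mp _ _ ih1 ih2 => exact Form.boxT_mp ih1 ih2
end

section
/- Let X be a finite set of implications, B = ⋀X, and B′ = ⋀{E^□→F^□ : (E→F) ∈ X}. Then iK4 ⊢ □B′ ↔ □(B^□), and iK4 ⊢ □(B^□) → (B′ ↔ B^□). -/
namespace Form

/-- Derivability from hypotheses Γ in iK4 (no nec under hypotheses). -/
inductive DH_s17 : List Form → Form → Prop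
  | hyp {Γ A} : A ∈ Γ → DH_s17 Γ A
  | thm {Γ A} : IK4 A → DH_s17 Γ A
  | mp {Γ A B} : DH_s17 Γ (.imp A B) → DH_s17 Γ A → DH_s17 Γ B

namespace DH_s17

lemma axI {Γ A} (h : IpcAx A) : DH_s17 Γ A := .thm (.ax (Or.inl h))

lemma imp_self {Γ} (A : Form) : DH_s17 Γ (A.imp A) :=
  .mp (.mp (axI (.s A (A.imp A) A)) (axI (.k A (A.imp A)))) (axI (.k A A))

lemma ded' {Γ B} (h : DH_s17 Γ B) : ∀ A Δ, Γ = A :: Δ → DH_s17 Δ (A.imp B) := by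
  induction h with
  | hyp m =>
    intro A Δ e; subst e
    rcases List.mem_cons.mp m with h | h
    · subst h; exact imp_self _
    · exact .mp (axI (.k _ A)) (.hyp h)
  | thm t => intro A Δ e; exact .mp (axI (.k _ A)) (.thm t)
  | mp h1 h2 ih1 ih2 =>
    intro A Δ e
    exact .mp (.mp (axI (.s _ _ _)) (ih1 A Δ e)) (ih2 A Δ e)

lemma ded {Γ A B} (h : DH_s17 (A :: Γ) B) : DH_s17 Γ (A.imp B) := ded' h A Γ rfl

lemma toIK4 {A} (h : DH_s17 [] A) : IK4 A := by
  induction h with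
  | hyp m => simp at m
  | thm t => exact t
  | mp _ _ ih1 ih2 => exact ih1.mp ih2

lemma andI' {Γ : List Form} {A B : Form} (h1 : DH_s17 Γ A) (h2 : DH_s17 Γ B) : DH_s17 Γ (A.and B) :=
  .mp (.mp (axI (.andI A B)) h1) h2

lemma andE1' {Γ : List Form} {A B : Form} (h : DH_s17 Γ (A.and B)) : DH_s17 Γ A := .mp (axI (.andE₁ A B)) h
lemma andE2' {Γ : List Form} {A B : Form} (h : DH_s17 Γ (A.and B)) : DH_s17 Γ B := .mp (axI (.andE₂ A B)) h

end DH_s17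

lemma IK4.kax (A B : Form) : IK4 ((Form.box (A.imp B)).imp ((Form.box A).imp (Form.box B))) :=
  .ax (Or.inr (Or.inl ⟨A, B, rfl⟩))

lemma IK4.four (A : Form) : IK4 ((Form.box A).imp (Form.box (Form.box A))) :=
  .ax (Or.inr (Or.inr ⟨A, rfl⟩))

lemma IK4.nec_imp {A B : Form} (h : IK4 (A.imp B)) :
    IK4 ((Form.box A).imp (Form.box B)) :=
  (IK4.kax A B).mp h.nec

/-- □A → (□B → □(A∧B)). -/
lemma IK4.box_and (A B : Form) :
    IK4 ((Form.box A).imp ((Form.box B).imp (Form.box (A.and B)))) := by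
  apply DH_s17.toIK4
  apply DH_s17.ded; apply DH_s17.ded
  have hA : DH_s17 [Form.box B, Form.box A] (Form.box A) := .hyp (by simp)
  have hB : DH_s17 [Form.box B, Form.box A] (Form.box B) := .hyp (by simp)
  have t1 : IK4 ((Form.box A).imp (Form.box (B.imp (A.and B)))) :=
    IK4.nec_imp (.ax (Or.inl (.andI A B)))
  exact .mp (.mp (.thm (IK4.kax B (A.and B))) (.mp (.thm t1) hA)) hB

/-- B′ for a list of implication pairs. -/
def bprime (X : List (Form × Form)) : Form :=
  conj (X.map fun D => .imp (boxT D.1) (boxT D.2))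

lemma bprime_nil : bprime [] = top := rfl
lemma bprime_cons (D : Form × Form) (X : List (Form × Form)) :
    bprime (D :: X) = Form.and (.imp (boxT D.1) (boxT D.2)) (bprime X) := rfl

lemma boxT_conj_nil : boxT (conj (impsOf [])) = Form.and top (.box top) := rfl
lemma boxT_conj_cons (D : Form × Form) (X : List (Form × Form)) :
    boxT (conj (impsOf (D :: X))) =
      Form.and (Form.and (.imp (boxT D.1) (boxT D.2))
          (.box (.imp (boxT D.1) (boxT D.2))))
        (boxT (conj (impsOf X))) := rfl

/-- Key lemma A: iK4 ⊢ B′ ∧ □B′ → B^□. -/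
lemma lemA (X : List (Form × Form)) :
    IK4 ((Form.and (bprime X) (.box (bprime X))).imp (boxT (conj (impsOf X)))) := by
  induction X with
  | nil =>
    apply DH_s17.toIK4; apply DH_s17.ded
    rw [boxT_conj_nil]
    have h : DH_s17 [Form.and (bprime []) (.box (bprime []))]
        (Form.and (bprime []) (.box (bprime []))) := .hyp (by simp)
    exact DH_s17.andI' (DH_s17.andE1' h) (DH_s17.andE2' h)
  | cons D X ih =>
    apply DH_s17.toIK4; apply DH_s17.ded
    rw [boxT_conj_cons, bprime_cons]
    set P : Form := .imp (boxT D.1) (boxT D.2) with hP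
    set C : Form := bprime X with hC
    have h : DH_s17 [Form.and (P.and C) (.box (P.and C))]
        (Form.and (P.and C) (.box (P.and C))) := .hyp (by simp)
    have hPC := DH_s17.andE1' h
    have hbox := DH_s17.andE2' h
    have hp := DH_s17.andE1' hPC
    have hc := DH_s17.andE2' hPC
    have hbP : DH_s17 [Form.and (P.and C) (.box (P.and C))] (Form.box P) :=
      .mp (.thm (IK4.nec_imp (.ax (Or.inl (.andE₁ P C))))) hbox
    have hbC : DH_s17 [Form.and (P.and C) (.box (P.and C))] (Form.box C) :=
      .mp (.thm (IK4.nec_imp (.ax (Or.inl (.andE₂ P C))))) hbox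
    exact DH_s17.andI' (DH_s17.andI' hp hbP) (.mp (.thm ih) (DH_s17.andI' hc hbC))

/-- Key lemma B: iK4 ⊢ B^□ → B′. -/
lemma lemB (X : List (Form × Form)) :
    IK4 ((boxT (conj (impsOf X))).imp (bprime X)) := by
  induction X with
  | nil => exact .ax (Or.inl (.andE₁ top (.box top)))
  | cons D X ih =>
    apply DH_s17.toIK4; apply DH_s17.ded
    rw [boxT_conj_cons, bprime_cons]
    set P : Form := .imp (boxT D.1) (boxT D.2) with hP
    set Bb : Form := boxT (conj (impsOf X)) with hBb
    have h : DH_s17 [Form.and (P.and (.box P)) Bb] (Form.and (P.and (.box P)) Bb) :=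
      .hyp (by simp)
    exact DH_s17.andI' (DH_s17.andE1' (DH_s17.andE1' h)) (.mp (.thm ih) (DH_s17.andE2' h))

end Form

/-- For X a finite set of implications, B = ⋀X and
B′ = ⋀{E^□→F^□ : (E→F)∈X}: iK4 ⊢ □B′ ↔ □(B^□), and iK4 ⊢ □(B^□) → (B′ ↔ B^□). -/
theorem stmt17 (X : List (Form × Form)) :
    Form.IK4 (Form.biimp
      (.box (Form.conj (X.map fun D => .imp (Form.boxT D.1) (Form.boxT D.2))))
      (.box (Form.boxT (Form.conj (Form.impsOf X))))) ∧
    Form.IK4 (.imp (.box (Form.boxT (Form.conj (Form.impsOf X))))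
      (Form.biimp (Form.conj (X.map fun D => .imp (Form.boxT D.1) (Form.boxT D.2)))
        (Form.boxT (Form.conj (Form.impsOf X))))) := by
  have e : Form.conj (X.map fun D => .imp (Form.boxT D.1) (Form.boxT D.2)) = Form.bprime X := rfl
  rw [e]
  set B' := Form.bprime X with hB'
  set Bb := Form.boxT (Form.conj (Form.impsOf X)) with hBb
  have fwd : Form.IK4 ((Form.box B').imp (Form.box Bb)) := by
    apply Form.DH_s17.toIK4; apply Form.DH_s17.ded
    have h : Form.DH_s17 [Form.box B'] (Form.box B') := .hyp (by simp)
    have h4 : Form.DH_s17 [Form.box B'] (Form.box (Form.box B')) := Form.DH_s17.mp (.thm (Form.IK4.four B')) h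
    have hand : Form.DH_s17 [Form.box B'] (Form.box (Form.and B' (Form.box B'))) := Form.DH_s17.mp (Form.DH_s17.mp (.thm (Form.IK4.box_and B' (Form.box B'))) h) h4
    exact .mp (.thm (Form.IK4.nec_imp (Form.lemA X))) hand
  have bwd : Form.IK4 ((Form.box Bb).imp (Form.box B')) := Form.IK4.nec_imp (Form.lemB X)
  constructor
  · exact Form.DH_s17.toIK4 (Form.DH_s17.andI' (.thm fwd) (.thm bwd))
  · apply Form.DH_s17.toIK4; apply Form.DH_s17.ded
    have fwd2 : Form.DH_s17 [Form.box Bb] (B'.imp Bb) := by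
      apply Form.DH_s17.ded
      have hb : Form.DH_s17 [B', Form.box Bb] B' := .hyp (by simp)
      have hbb : Form.DH_s17 [B', Form.box Bb] (Form.box Bb) := .hyp (by simp)
      have hbB' : Form.DH_s17 [B', Form.box Bb] (Form.box B') := Form.DH_s17.mp (.thm bwd) hbb
      exact .mp (.thm (Form.lemA X)) (Form.DH_s17.andI' hb hbB')
    exact Form.DH_s17.andI' fwd2 (.thm (Form.lemB X))
end
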